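/- arXiv:2008.01662 — 5 statements merged into one kernel-verified Lean document; each statement's English description precedes it below -/
import Mathlib

section
/- Let a, b₁, b₂ > 0 and define φ₁(u) = 3b₁(u+1)⁴ − (8b₁ + 4ab₂)(u+1)³ + 6b₁(1−a)(u+1)² − b₁(a−1)². Then φ₁ has exactly one zero in (0, +∞). -/
noncomputable def phi1 (a b1 b2 u : ℝ) : ℝ :=
  3 * b1 * (u + 1) ^ 4 - (8 * b1 + 4 * a * b2) * (u + 1) ^ 3 +
    6 * b1 * (1 - a) * (u + 1) ^ 2 - b1 * (a - 1) ^ 2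

lemma phi1_hasDerivAt (a b1 b2 x : ℝ) :
    HasDerivAt (fun u => phi1 a b1 b2 u)
      (12*b1*(x+1)^3 - 3*(8*b1+4*a*b2)*(x+1)^2 + 12*b1*(1-a)*(x+1)) x := by
  have h : HasDerivAt (fun u : ℝ => u + 1) 1 x := (hasDerivAt_id x).add_const 1
  have H := ((((h.fun_pow 4).const_mul (3*b1)).sub ((h.fun_pow 3).const_mul (8*b1+4*a*b2))).add
    ((h.fun_pow 2).const_mul (6*b1*(1-a)))).sub_const (b1*(a-1)^2)
  refine H.congr_deriv ?_
  push_cast; ring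

lemma key_pos (a b1 b2 t : ℝ) (ha : 0 < a) (hb1 : 0 < b1) (hb2 : 0 < b2) (ht : 1 < t) :
    0 < (8*b1+4*a*b2)*t^3 - 12*b1*(1-a)*t^2 + 4*b1*(a-1)^2 := by
  nlinarith [mul_pos (mul_pos ha hb2) (pow_pos (by linarith : (0:ℝ) < t) 3),
    mul_pos hb1 (mul_pos (mul_pos (sub_pos.2 ht) (sub_pos.2 ht)) (by linarith : (0:ℝ) < 2*t+1)),
    mul_nonneg (mul_nonneg hb1.le ha.le) (by nlinarith : (0:ℝ) ≤ 3*t^2 - 2 + a)]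

theorem phi1_unique_pos_zero (a b1 b2 : ℝ) (ha : 0 < a) (hb1 : 0 < b1) (hb2 : 0 < b2) :
    ∃! u : ℝ, 0 < u ∧ phi1 a b1 b2 u = 0 := by
  set g : ℝ → ℝ := fun u => phi1 a b1 b2 u / (u+1)^4 with hg_def
  have hne : ∀ u : ℝ, u ∈ Set.Ici (0:ℝ) → (u+1)^4 ≠ 0 := by
    intro u hu
    have : (0:ℝ) < u + 1 := by simp at hu; linarith
    positivity
  have hcont : Continuous (fun u => phi1 a b1 b2 u) := by
    simp only [phi1]; continuity
  have hgmono : StrictMonoOn g (Set.Ici 0) := by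
    apply strictMonoOn_of_deriv_pos (convex_Ici 0)
    · exact hcont.continuousOn.div
        ((by continuity : Continuous fun u : ℝ => (u+1)^4).continuousOn) hne
    · intro x hx
      rw [interior_Ici] at hx
      have hx0 : (0:ℝ) < x := hx
      have ht : (1:ℝ) < x + 1 := by linarith
      have ht0 : (0:ℝ) < x + 1 := by linarith
      have hden : HasDerivAt (fun u : ℝ => (u+1)^4) (4*(x+1)^3) x := by
        have h : HasDerivAt (fun u : ℝ => u + 1) 1 x := (hasDerivAt_id x).add_const 1
        refine (h.fun_pow 4).congr_deriv ?_; push_cast; ring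
      have hd := (phi1_hasDerivAt a b1 b2 x).div hden (by positivity)
      rw [show deriv g x = _ from hd.deriv]
      have hnum : (12*b1*(x+1)^3 - 3*(8*b1+4*a*b2)*(x+1)^2 + 12*b1*(1-a)*(x+1)) * (x+1)^4
          - phi1 a b1 b2 x * (4*(x+1)^3)
          = (x+1)^3 * ((8*b1+4*a*b2)*(x+1)^3 - 12*b1*(1-a)*(x+1)^2 + 4*b1*(a-1)^2) := by
        simp only [phi1]; ring
      rw [hnum]
      exact div_pos (mul_pos (pow_pos ht0 3) (key_pos a b1 b2 (x+1) ha hb1 hb2 ht))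
        (by positivity)
  -- existence
  have hf0 : phi1 a b1 b2 0 < 0 := by
    simp only [phi1]; norm_num
    nlinarith [mul_pos ha hb1, mul_pos ha hb2, mul_pos (mul_pos ha ha) hb1]
  set T : ℝ := (8*b1+4*a*b2+6*a*b1+b1*(a+1)^2)/b1 + 1 with hT_def
  have hT : b1 * T = 8*b1+4*a*b2+6*a*b1+b1*(a+1)^2 + b1 := by
    rw [hT_def, mul_add, mul_one, mul_div_cancel₀ _ hb1.ne']
  have hT1 : 1 < T := by
    rw [hT_def]
    have : 0 < (8*b1+4*a*b2+6*a*b1+b1*(a+1)^2)/b1 := by positivity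
    linarith
  have hM0 : (0:ℝ) < T - 1 := by linarith
  have hfM : 0 < phi1 a b1 b2 (T - 1) := by
    simp only [phi1]
    have e : T - 1 + 1 = T := by ring
    rw [e]
    have hT0 : (0:ℝ) < T := by linarith
    nlinarith [pow_pos hT0 3, pow_pos hT0 2, sq_nonneg (a-1),
      mul_pos (pow_pos hT0 3) hb1, mul_pos (pow_pos hT0 2) hb1,
      mul_pos hb1 hT0, sq_nonneg T, mul_pos ha hb1,
      mul_nonneg (mul_pos ha hb1).le (sq_nonneg (T-1)),
      mul_nonneg hb1.le (mul_nonneg (sq_nonneg (T-1)) (sub_nonneg.2 hT1.le))]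
  obtain ⟨u₀, hu₀mem, hu₀⟩ := intermediate_value_Ioo (le_of_lt hM0) hcont.continuousOn
    (Set.mem_Ioo.2 ⟨hf0, hfM⟩)
  refine ⟨u₀, ⟨hu₀mem.1, hu₀⟩, ?_⟩
  intro y ⟨hy0, hy⟩
  have hgy : g y = 0 := by simp [hg_def, hy]
  have hgu : g u₀ = 0 := by simp [hg_def, hu₀]
  exact hgmono.injOn (Set.mem_Ici.2 hy0.le) (Set.mem_Ici.2 hu₀mem.1.le) (hgy.trans hgu.symm)
end

section
/- Under the substitution x = u² + 2u (equivalently u = √(1+x) − 1, u ≥ 0), the second derivative of ψ₁(x) = (b₁φ(x) + b₂x)/(a + x) + x with φ(x) = 2(√(1+x) − 1) satisfies 2(u+1)³(u² + 2u + a)³ ψ₁″(x(u)) = 3b₁(u+1)⁴ − (8b₁+4ab₂)(u+1)³ + 6b₁(1−a)(u+1)² − b₁(a−1)² for all u > 0. -/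
noncomputable def phi (x : ℝ) : ℝ := 2 * (Real.sqrt (1 + x) - 1)

noncomputable def psi1 (a b1 b2 x : ℝ) : ℝ := (b1 * phi x + b2 * x) / (a + x) + x

noncomputable def Fd (a b1 b2 x : ℝ) : ℝ :=
  ((b1 * (Real.sqrt (1 + x))⁻¹ + b2) * (a + x) - (b1 * phi x + b2 * x)) / ((a + x) ^ 2) + 1

noncomputable def Gd (a b1 b2 x : ℝ) : ℝ :=
  ((-(b1 * (a + x)) / (2 * (Real.sqrt (1 + x)) ^ 3)) * ((a + x) ^ 2) -
    ((b1 * (Real.sqrt (1 + x))⁻¹ + b2) * (a + x) - (b1 * phi x + b2 * x)) * (2 * (a + x))) /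
    ((a + x) ^ 2) ^ 2

lemma hsqrt_deriv (x : ℝ) (hx : 0 < x) :
    HasDerivAt (fun y : ℝ => Real.sqrt (1 + y)) ((2 * Real.sqrt (1 + x))⁻¹) x := by
  have h1 : HasDerivAt (fun y : ℝ => 1 + y) 1 x := (hasDerivAt_id x).const_add 1
  have h2 := (Real.hasDerivAt_sqrt (by linarith : (1:ℝ) + x ≠ 0)).comp x h1
  simpa [one_div, Function.comp_def] using h2

lemma hF_deriv (a b1 b2 : ℝ) (ha : 0 < a) (x : ℝ) (hx : 0 < x) :
    HasDerivAt (psi1 a b1 b2) (Fd a b1 b2 x) x := by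
  have hs := hsqrt_deriv x hx
  have hsp : 0 < Real.sqrt (1 + x) := Real.sqrt_pos.2 (by linarith)
  have hphi : HasDerivAt phi ((Real.sqrt (1 + x))⁻¹) x := by
    have h := ((hs.sub_const 1).const_mul 2)
    rw [show ((Real.sqrt (1 + x))⁻¹) = 2 * (2 * Real.sqrt (1 + x))⁻¹ by
      rw [mul_inv]; field_simp]
    exact h
  have hN : HasDerivAt (fun y => b1 * phi y + b2 * y)
      (b1 * (Real.sqrt (1 + x))⁻¹ + b2) x := by
    have := (hphi.const_mul b1).add ((hasDerivAt_id x).const_mul b2)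
    simpa [Pi.add_def] using this
  have hD : HasDerivAt (fun y : ℝ => a + y) 1 x := (hasDerivAt_id x).const_add a
  have hDne : a + x ≠ 0 := by positivity
  have hdiv := (hN.div hD hDne).add (hasDerivAt_id x)
  unfold psi1
  simpa [Fd, Pi.add_def, Pi.div_def] using hdiv

lemma hG_deriv (a b1 b2 : ℝ) (ha : 0 < a) (x : ℝ) (hx : 0 < x) :
    HasDerivAt (Fd a b1 b2) (Gd a b1 b2 x) x := by
  have hs := hsqrt_deriv x hx
  have hsp : 0 < Real.sqrt (1 + x) := Real.sqrt_pos.2 (by linarith)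
  have hsne : Real.sqrt (1 + x) ≠ 0 := ne_of_gt hsp
  have hphi : HasDerivAt phi ((Real.sqrt (1 + x))⁻¹) x := by
    have h := ((hs.sub_const 1).const_mul 2)
    rw [show ((Real.sqrt (1 + x))⁻¹) = 2 * (2 * Real.sqrt (1 + x))⁻¹ by
      rw [mul_inv]; field_simp]
    exact h
  have hN : HasDerivAt (fun y => b1 * phi y + b2 * y)
      (b1 * (Real.sqrt (1 + x))⁻¹ + b2) x := by
    have := (hphi.const_mul b1).add ((hasDerivAt_id x).const_mul b2)
    simpa [Pi.add_def] using this
  have hD : HasDerivAt (fun y : ℝ => a + y) 1 x := (hasDerivAt_id x).const_add a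
  have hDne : a + x ≠ 0 := by positivity
  have hsinv : HasDerivAt (fun y : ℝ => (Real.sqrt (1 + y))⁻¹)
      (-(2 * Real.sqrt (1 + x))⁻¹ / (Real.sqrt (1 + x)) ^ 2) x := hs.inv hsne
  have hN' : HasDerivAt (fun y => b1 * (Real.sqrt (1 + y))⁻¹ + b2)
      (b1 * (-(2 * Real.sqrt (1 + x))⁻¹ / (Real.sqrt (1 + x)) ^ 2)) x := by
    have := (hsinv.const_mul b1).add_const b2
    simpa using this
  have hP : HasDerivAt
      (fun y => (b1 * (Real.sqrt (1 + y))⁻¹ + b2) * (a + y) - (b1 * phi y + b2 * y))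
      (-(b1 * (a + x)) / (2 * (Real.sqrt (1 + x)) ^ 3)) x := by
    have h : HasDerivAt (fun y => (b1 * (Real.sqrt (1 + y))⁻¹ + b2) * (a + y) - (b1 * phi y + b2 * y)) _ x :=
      (hN'.mul hD).sub hN
    have hsq : Real.sqrt (1 + x) ^ 2 = 1 + x := Real.sq_sqrt (by linarith)
    convert h using 1
    field_simp
    linear_combination
  have hQ : HasDerivAt (fun y : ℝ => (a + y) ^ 2) (2 * (a + x)) x := by
    have := hD.pow 2
    simpa [Pi.pow_def] using this
  have hQne : (a + x) ^ 2 ≠ 0 := pow_ne_zero 2 hDne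
  have hdiv := (hP.div hQ hQne).add_const 1
  unfold Fd
  simpa [Gd] using hdiv

theorem psi1_second_deriv_formula (a b1 b2 : ℝ) (ha : 0 < a) (hb1 : 0 < b1) (hb2 : 0 < b2) :
    ∀ u : ℝ, 0 < u →
      2 * (u + 1) ^ 3 * (u ^ 2 + 2 * u + a) ^ 3 *
        deriv (deriv (psi1 a b1 b2)) (u ^ 2 + 2 * u) = phi1 a b1 b2 u := by
  intro u hu
  set x : ℝ := u ^ 2 + 2 * u with hxdef
  have hx : 0 < x := by positivity
  have hev : deriv (psi1 a b1 b2) =ᶠ[nhds x] Fd a b1 b2 :=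
    Filter.eventuallyEq_of_mem (Ioi_mem_nhds hx)
      (fun y hy => (hF_deriv a b1 b2 ha y hy).deriv)
  have h2 : deriv (deriv (psi1 a b1 b2)) x = Gd a b1 b2 x := by
    rw [hev.deriv_eq, (hG_deriv a b1 b2 ha x hx).deriv]
  rw [h2]
  have hsu : Real.sqrt (1 + x) = u + 1 := by
    have : (1 : ℝ) + x = (u + 1) ^ 2 := by rw [hxdef]; ring
    rw [this, Real.sqrt_sq (by linarith)]
  have hune : u + 1 ≠ 0 := by linarith
  have haxne : a + x ≠ 0 := by positivity
  rw [show u ^ 2 + 2 * u + a = a + x by rw [hxdef]; ring]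
  unfold Gd phi phi1
  rw [hsu]
  field_simp
  ring
end

section
/- Let a, b₁, b₂ > 0, ψ₁ and x₊ as above. If ψ₁′(x₊) < 0, then ψ₁′ has exactly two zeros x_m and x_M on (0,∞) with 0 < x_m < x₊ < x_M, and ψ₁′(x) > 0 for 0 < x < x_m and for x > x_M, while ψ₁′(x) < 0 for x_m < x < x_M. -/
noncomputable def Dfun (a b1 b2 x : ℝ) : ℝ :=
  ((b1 / Real.sqrt (1 + x) + b2) * (a + x) - (b1 * phi x + b2 * x)) / (a + x) ^ 2 + 1

noncomputable def Pfun (a b1 b2 s : ℝ) : ℝ :=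
  (-b1 * s ^ 2 + (2 * b1 + a * b2) * s + b1 * (a - 1)) / (s * (s ^ 2 + a - 1) ^ 2) + 1

noncomputable def Pder (a b1 b2 s : ℝ) : ℝ :=
  phi1 a b1 b2 (s - 1) / (s ^ 2 * (s ^ 2 + a - 1) ^ 3)

noncomputable def Hfun (a b1 b2 s : ℝ) : ℝ :=
  3 * b1 * s - (8 * b1 + 4 * a * b2) + 6 * b1 * (1 - a) / s - b1 * (a - 1) ^ 2 / s ^ 3

lemma hasDerivAt_psi1 (a b1 b2 x : ℝ) (ha : 0 < a) (hx : 0 ≤ x) :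
    HasDerivAt (psi1 a b1 b2) (Dfun a b1 b2 x) x := by
  have h1x : (0:ℝ) < 1 + x := by linarith
  have hs : 0 < Real.sqrt (1 + x) := Real.sqrt_pos.mpr h1x
  have hax : 0 < a + x := by linarith
  have hone : HasDerivAt (fun y : ℝ => 1 + y) 1 x := by
    simpa using (hasDerivAt_id x).const_add (1:ℝ)
  have hsqrt : HasDerivAt (fun y : ℝ => Real.sqrt (1 + y)) (1 / (2 * Real.sqrt (1 + x))) x := by
    simpa [Function.comp_def] using (Real.hasDerivAt_sqrt (ne_of_gt h1x)).comp x hone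
  have hphi : HasDerivAt phi (1 / Real.sqrt (1 + x)) x := by
    have h := (hsqrt.sub_const 1).const_mul 2
    have : 2 * (1 / (2 * Real.sqrt (1 + x))) = 1 / Real.sqrt (1 + x) := by
      field_simp
    rw [this] at h
    exact h
  have hnum : HasDerivAt (fun y => b1 * phi y + b2 * y)
      (b1 * (1 / Real.sqrt (1 + x)) + b2) x := by
    simpa [Pi.add_def] using (hphi.const_mul b1).add ((hasDerivAt_id x).const_mul b2)
  have hden : HasDerivAt (fun y : ℝ => a + y) 1 x := by
    simpa using (hasDerivAt_id x).const_add a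
  have hdiv := (hnum.div hden (ne_of_gt hax)).add (hasDerivAt_id x)
  have heq : ((b1 * (1 / Real.sqrt (1 + x)) + b2) * (a + x) -
      (b1 * phi x + b2 * x) * 1) / (a + x) ^ 2 + 1 = Dfun a b1 b2 x := by
    unfold Dfun
    ring_nf
  rw [heq] at hdiv
  exact hdiv

lemma deriv_psi1_eq (a b1 b2 x : ℝ) (ha : 0 < a) (hx : 0 ≤ x) :
    deriv (psi1 a b1 b2) x = Dfun a b1 b2 x :=
  (hasDerivAt_psi1 a b1 b2 x ha hx).deriv

lemma Dfun_eq_Pfun (a b1 b2 x : ℝ) (ha : 0 < a) (hx : 0 ≤ x) :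
    Dfun a b1 b2 x = Pfun a b1 b2 (Real.sqrt (1 + x)) := by
  have h1x : (0:ℝ) < 1 + x := by linarith
  set s := Real.sqrt (1 + x) with hsdef
  have hs : 0 < s := Real.sqrt_pos.mpr h1x
  have hs2 : s ^ 2 = 1 + x := Real.sq_sqrt (le_of_lt h1x)
  have hxx : x = s ^ 2 - 1 := by linarith
  have hax : 0 < a + x := by linarith
  have haxs : s ^ 2 + a - 1 ≠ 0 := by
    intro h; rw [hs2] at h; apply ne_of_gt hax; linarith
  have hs0 : s ≠ 0 := ne_of_gt hs
  have hax' : a + (s ^ 2 - 1) ≠ 0 := by intro h; apply ne_of_gt hax; rw [hxx]; linarith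
  unfold Dfun Pfun phi
  rw [← hsdef, hxx]
  congr 1
  rw [div_eq_div_iff (pow_ne_zero 2 hax') (mul_ne_zero hs0 (pow_ne_zero 2 haxs))]
  field_simp
  ring

lemma hasDerivAt_Pfun (a b1 b2 s : ℝ) (ha : 0 < a) (hs : 1 ≤ s) :
    HasDerivAt (Pfun a b1 b2) (Pder a b1 b2 s) s := by
  have hs0 : s ≠ 0 := by linarith
  have hsa : 0 < s ^ 2 + a - 1 := by nlinarith
  have hB0 : s * (s ^ 2 + a - 1) ^ 2 ≠ 0 := by positivity
  have hA : HasDerivAt (fun t : ℝ => -b1 * t ^ 2 + (2 * b1 + a * b2) * t + b1 * (a - 1))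
      (-b1 * (2 * s) + (2 * b1 + a * b2)) s := by
    have h1 := (hasDerivAt_pow 2 s).const_mul (-b1)
    have h2 := (hasDerivAt_id s).const_mul (2 * b1 + a * b2)
    simpa using (h1.add h2).add_const (b1 * (a - 1))
  have hBin : HasDerivAt (fun t : ℝ => (t ^ 2 + a - 1) ^ 2)
      (2 * (s ^ 2 + a - 1) ^ 1 * (2 * s)) s := by
    have h1 : HasDerivAt (fun t : ℝ => t ^ 2 + a - 1) (2 * s) s := by
      simpa using ((hasDerivAt_pow 2 s).add_const a).sub_const 1
    simpa [Pi.pow_def] using h1.pow 2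
  have hB : HasDerivAt (fun t : ℝ => t * (t ^ 2 + a - 1) ^ 2)
      (1 * (s ^ 2 + a - 1) ^ 2 + s * (2 * (s ^ 2 + a - 1) ^ 1 * (2 * s))) s :=
    (hasDerivAt_id s).mul hBin
  have hdiv := (hA.div hB hB0).add_const (1:ℝ)
  have heq : ((-b1 * (2 * s) + (2 * b1 + a * b2)) * (s * (s ^ 2 + a - 1) ^ 2) -
      (-b1 * s ^ 2 + (2 * b1 + a * b2) * s + b1 * (a - 1)) *
      (1 * (s ^ 2 + a - 1) ^ 2 + s * (2 * (s ^ 2 + a - 1) ^ 1 * (2 * s)))) /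
      (s * (s ^ 2 + a - 1) ^ 2) ^ 2 = Pder a b1 b2 s := by
    unfold Pder phi1
    rw [div_eq_div_iff (by positivity) (by positivity)]
    ring
  rw [heq] at hdiv
  exact hdiv

lemma hasDerivAt_Hfun (a b1 b2 s : ℝ) (hs0 : s ≠ 0) :
    HasDerivAt (Hfun a b1 b2) (3 * b1 * (s ^ 2 + a - 1) ^ 2 / s ^ 4) s := by
  have h1 : HasDerivAt (fun t : ℝ => 3 * b1 * t - (8 * b1 + 4 * a * b2))
      (3 * b1) s := by
    simpa using ((hasDerivAt_id s).const_mul (3 * b1)).sub_const (8 * b1 + 4 * a * b2)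
  have h2 : HasDerivAt (fun t : ℝ => 6 * b1 * (1 - a) / t)
      (6 * b1 * (1 - a) * (-(s ^ 2)⁻¹)) s := by
    have := (hasDerivAt_inv hs0).const_mul (6 * b1 * (1 - a))
    simpa [div_eq_mul_inv, mul_comm] using this
  have h3 : HasDerivAt (fun t : ℝ => b1 * (a - 1) ^ 2 / t ^ 3)
      (b1 * (a - 1) ^ 2 * (-(3 * s ^ 2 / (s ^ 3) ^ 2))) s := by
    have hp : HasDerivAt (fun t : ℝ => t ^ 3) (3 * s ^ 2) s := by
      simpa using hasDerivAt_pow 3 s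
    have := (hp.inv (pow_ne_zero 3 hs0)).const_mul (b1 * (a - 1) ^ 2)
    simpa [div_eq_mul_inv, mul_comm, mul_assoc, mul_left_comm] using this
  have h := (h1.add h2).sub h3
  have heq : 3 * b1 + 6 * b1 * (1 - a) * (-(s ^ 2)⁻¹) -
      b1 * (a - 1) ^ 2 * (-(3 * s ^ 2 / (s ^ 3) ^ 2)) =
      3 * b1 * (s ^ 2 + a - 1) ^ 2 / s ^ 4 := by
    field_simp
    ring
  rw [heq] at h
  exact h

lemma phi1_eq_Hfun (a b1 b2 s : ℝ) (hs0 : s ≠ 0) :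
    phi1 a b1 b2 (s - 1) = Hfun a b1 b2 s * s ^ 3 := by
  unfold phi1 Hfun
  field_simp
  ring

lemma Hfun_strictMonoOn (a b1 b2 : ℝ) (ha : 0 < a) (hb1 : 0 < b1) :
    StrictMonoOn (Hfun a b1 b2) (Set.Ici 1) := by
  apply strictMonoOn_of_deriv_pos (convex_Ici 1)
  · intro s hs
    have hs0 : s ≠ 0 := by simp at hs; intro h; rw [h] at hs; linarith
    exact (hasDerivAt_Hfun a b1 b2 s hs0).continuousAt.continuousWithinAt
  · intro s hs
    rw [interior_Ici] at hs
    have hs1 : 1 < s := hs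
    have hs0 : s ≠ 0 := by linarith
    rw [(hasDerivAt_Hfun a b1 b2 s hs0).deriv]
    have hsa : 0 < s ^ 2 + a - 1 := by nlinarith
    positivity

set_option maxHeartbeats 1000000 in
theorem psi1_two_critical_points (a b1 b2 uplus : ℝ)
    (ha : 0 < a) (hb1 : 0 < b1) (hb2 : 0 < b2)
    (hu : 0 < uplus) (hzero : phi1 a b1 b2 uplus = 0)
    (xplus : ℝ) (hx : xplus = uplus ^ 2 + 2 * uplus)
    (hneg : deriv (psi1 a b1 b2) xplus < 0) :
    ∃ xm xM : ℝ, 0 < xm ∧ xm < xplus ∧ xplus < xM ∧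
      deriv (psi1 a b1 b2) xm = 0 ∧ deriv (psi1 a b1 b2) xM = 0 ∧
      (∀ x : ℝ, 0 < x → x < xm → 0 < deriv (psi1 a b1 b2) x) ∧
      (∀ x : ℝ, xM < x → 0 < deriv (psi1 a b1 b2) x) ∧
      (∀ x : ℝ, xm < x → x < xM → deriv (psi1 a b1 b2) x < 0) := by
  set t := uplus + 1 with htdef
  have ht1 : 1 < t := by linarith
  have hxp : 0 < xplus := by nlinarith
  -- deriv psi1 = Pfun ∘ sqrt(1+·)
  have hds : ∀ x : ℝ, 0 ≤ x → deriv (psi1 a b1 b2) x = Pfun a b1 b2 (Real.sqrt (1 + x)) := by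
    intro x hx0
    rw [deriv_psi1_eq a b1 b2 x ha hx0, Dfun_eq_Pfun a b1 b2 x ha hx0]
  -- sqrt(1+xplus) = t
  have hsx : Real.sqrt (1 + xplus) = t := by
    rw [hx]
    have : 1 + (uplus ^ 2 + 2 * uplus) = (uplus + 1) ^ 2 := by ring
    rw [this, Real.sqrt_sq (by linarith)]
  -- Hfun t = 0
  have hHt : Hfun a b1 b2 t = 0 := by
    have h := phi1_eq_Hfun a b1 b2 t (by linarith)
    have ht0 : (0:ℝ) < t ^ 3 := by positivity
    have : phi1 a b1 b2 (t - 1) = 0 := by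
      have : t - 1 = uplus := by ring
      rw [this]; exact hzero
    rw [this] at h
    rcases mul_eq_zero.mp h.symm with h' | h'
    · exact h'
    · exact absurd h' (by positivity)
  have hHmono := Hfun_strictMonoOn a b1 b2 ha hb1
  -- sign of phi1 (s-1)
  have hFneg : ∀ s : ℝ, 1 < s → s < t → phi1 a b1 b2 (s - 1) < 0 := by
    intro s h1 h2
    have hH : Hfun a b1 b2 s < 0 := by
      have := hHmono (Set.mem_Ici.mpr (le_of_lt h1)) (Set.mem_Ici.mpr (le_of_lt ht1)) h2
      linarith [hHt ▸ this]
    rw [phi1_eq_Hfun a b1 b2 s (by linarith)]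
    have : (0:ℝ) < s ^ 3 := by positivity
    exact mul_neg_of_neg_of_pos hH this
  have hFpos : ∀ s : ℝ, t < s → 0 < phi1 a b1 b2 (s - 1) := by
    intro s h2
    have h1 : 1 < s := lt_trans ht1 h2
    have hH : 0 < Hfun a b1 b2 s := by
      have := hHmono (Set.mem_Ici.mpr (le_of_lt ht1)) (Set.mem_Ici.mpr (le_of_lt h1)) h2
      linarith [hHt ▸ this]
    rw [phi1_eq_Hfun a b1 b2 s (by linarith)]
    have : (0:ℝ) < s ^ 3 := by positivity
    exact mul_pos hH this
  -- Pfun strict anti on [1,t], strict mono on [t,∞)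
  have hPanti : StrictAntiOn (Pfun a b1 b2) (Set.Icc 1 t) := by
    apply strictAntiOn_of_deriv_neg (convex_Icc 1 t)
    · intro s hs
      exact (hasDerivAt_Pfun a b1 b2 s ha hs.1).continuousAt.continuousWithinAt
    · intro s hs
      rw [interior_Icc] at hs
      rw [(hasDerivAt_Pfun a b1 b2 s ha (le_of_lt hs.1)).deriv]
      unfold Pder
      apply div_neg_of_neg_of_pos (hFneg s hs.1 hs.2)
      have h1 : 1 < s := hs.1
      have : 0 < s ^ 2 + a - 1 := by nlinarith
      positivity
  have hPmono : StrictMonoOn (Pfun a b1 b2) (Set.Ici t) := by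
    apply strictMonoOn_of_deriv_pos (convex_Ici t)
    · intro s hs
      exact (hasDerivAt_Pfun a b1 b2 s ha (le_trans (le_of_lt ht1) hs)).continuousAt.continuousWithinAt
    · intro s hs
      rw [interior_Ici] at hs
      have h1 : 1 < s := lt_trans ht1 hs
      rw [(hasDerivAt_Pfun a b1 b2 s ha (le_of_lt h1)).deriv]
      unfold Pder
      apply div_pos (hFpos s hs)
      have : 0 < s ^ 2 + a - 1 := by nlinarith
      positivity
  -- helper facts about sqrt
  have hsq1 : ∀ x : ℝ, 0 ≤ x → 1 ≤ Real.sqrt (1 + x) := by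
    intro x hx0
    have := Real.sqrt_le_sqrt (show (1:ℝ) ≤ 1 + x by linarith)
    rwa [Real.sqrt_one] at this
  have hsqlt : ∀ x y : ℝ, 0 ≤ x → x < y → Real.sqrt (1 + x) < Real.sqrt (1 + y) := by
    intro x y hx0 hxy
    exact Real.sqrt_lt_sqrt (by linarith) (by linarith)
  have hsqle : ∀ x y : ℝ, x ≤ y → Real.sqrt (1 + x) ≤ Real.sqrt (1 + y) := by
    intro x y hxy
    exact Real.sqrt_le_sqrt (by linarith)
  -- deriv psi1 strict anti on [0,xplus]
  have hanti : ∀ x y : ℝ, 0 ≤ x → x < y → y ≤ xplus →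
      deriv (psi1 a b1 b2) y < deriv (psi1 a b1 b2) x := by
    intro x y hx0 hxy hyx
    rw [hds x hx0, hds y (by linarith)]
    apply hPanti
    · exact ⟨hsq1 x hx0, by rw [← hsx]; exact hsqle x xplus (by linarith)⟩
    · exact ⟨hsq1 y (by linarith), by rw [← hsx]; exact hsqle y xplus hyx⟩
    · exact hsqlt x y hx0 hxy
  -- deriv psi1 strict mono on [xplus,∞)
  have hmono : ∀ x y : ℝ, xplus ≤ x → x < y →
      deriv (psi1 a b1 b2) x < deriv (psi1 a b1 b2) y := by
    intro x y hx0 hxy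
    rw [hds x (by linarith), hds y (by linarith)]
    apply hPmono
    · exact Set.mem_Ici.mpr (by rw [← hsx]; exact hsqle xplus x hx0)
    · exact Set.mem_Ici.mpr (by rw [← hsx]; exact hsqle xplus y (by linarith))
    · exact hsqlt x y (by linarith) hxy
  -- value at 0
  have hP1 : Pfun a b1 b2 1 = (b1 + b2) / a + 1 := by
    unfold Pfun
    have h1a : (1:ℝ) * (1 ^ 2 + a - 1) ^ 2 = a ^ 2 := by ring
    rw [h1a, div_add_one (by positivity), div_add_one (by positivity),
      div_eq_div_iff (by positivity) (by positivity)]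
    ring
  have hg0 : 0 < Pfun a b1 b2 (Real.sqrt (1 + 0)) := by
    have h10 : (1:ℝ) + 0 = 1 := by norm_num
    rw [h10, Real.sqrt_one, hP1]
    positivity
  -- continuity of g
  have hgc : ∀ x : ℝ, 0 ≤ x → ContinuousAt (fun y => Pfun a b1 b2 (Real.sqrt (1 + y))) x := by
    intro x hx0
    have h1 : ContinuousAt (fun y : ℝ => Real.sqrt (1 + y)) x := by fun_prop
    exact ContinuousAt.comp (g := Pfun a b1 b2) (f := fun y : ℝ => Real.sqrt (1 + y))
      ((hasDerivAt_Pfun a b1 b2 _ ha (hsq1 x hx0)).continuousAt) h1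
  have hgcont : ∀ u v : ℝ, 0 ≤ u → ContinuousOn (fun y => Pfun a b1 b2 (Real.sqrt (1 + y))) (Set.Icc u v) := by
    intro u v hu
    intro x hxm
    exact (hgc x (le_trans hu hxm.1)).continuousWithinAt
  set g := fun y => Pfun a b1 b2 (Real.sqrt (1 + y)) with hgdef
  have hg0' : 0 < g 0 := hg0
  have hgxp : g xplus < 0 := by
    have := hds xplus (le_of_lt hxp)
    rw [this] at hneg
    exact hneg
  -- IVT on [0, xplus]
  have hivt1 : ∃ xm ∈ Set.Icc (0:ℝ) xplus, g xm = 0 := by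
    have hsub := intermediate_value_Icc' (le_of_lt hxp) (hgcont 0 xplus le_rfl)
    have h0mem : (0:ℝ) ∈ Set.Icc (g xplus) (g 0) := ⟨le_of_lt hgxp, le_of_lt hg0'⟩
    obtain ⟨xm, hxm, hgxm⟩ := hsub h0mem
    exact ⟨xm, hxm, hgxm⟩
  obtain ⟨xm, hxmm, hgxm⟩ := hivt1
  have hdxm : deriv (psi1 a b1 b2) xm = 0 := by rw [hds xm hxmm.1]; exact hgxm
  have hxm0 : 0 < xm := by
    rcases lt_or_eq_of_le hxmm.1 with h | h
    · exact h
    · exfalso; rw [← h] at hgxm; linarith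
  have hxmp : xm < xplus := by
    rcases lt_or_eq_of_le hxmm.2 with h | h
    · exact h
    · exfalso; rw [h] at hgxm; linarith
  -- find X with g X > 0
  obtain ⟨X, hXdef⟩ : ∃ X : ℝ, X = xplus + 3 * b1 + 3 := ⟨_, rfl⟩
  have hXp : xplus < X := by rw [hXdef]; nlinarith
  have hgX : 0 < g X := by
    have hX0 : 0 ≤ X := by linarith
    have h1X : (0:ℝ) < 1 + X := by linarith
    obtain ⟨s, hsdef2⟩ : ∃ s : ℝ, s = Real.sqrt (1 + X) := ⟨_, rfl⟩
    have hs1 : 1 ≤ s := hsdef2 ▸ hsq1 X hX0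
    have hs2 : s ^ 2 = 1 + X := by rw [hsdef2]; exact Real.sq_sqrt (le_of_lt h1X)
    have hsa : 0 < s ^ 2 + a - 1 := by nlinarith
    have hDn : 0 < s * (s ^ 2 + a - 1) ^ 2 := by positivity
    show 0 < Pfun a b1 b2 (Real.sqrt (1 + X))
    rw [← hsdef2]
    unfold Pfun
    have key : -(s * (s ^ 2 + a - 1) ^ 2) < -b1 * s ^ 2 + (2 * b1 + a * b2) * s + b1 * (a - 1) := by
      have hX3 : 3 ≤ X := by rw [hXdef]; linarith
      have hXb : 3 * b1 ≤ X := by rw [hXdef]; linarith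
      have hX0' : (0:ℝ) < X := by linarith
      have hm1 : 3 * b1 * X ≤ X * X :=
        mul_le_mul_of_nonneg_right hXb (by linarith)
      have hm2 : b1 * 3 ≤ b1 * X := mul_le_mul_of_nonneg_left hX3 (le_of_lt hb1)
      have h2 : b1 * (X + 2) < X ^ 2 := by nlinarith
      have h3 : X ^ 2 < (s ^ 2 + a - 1) ^ 2 := by nlinarith [mul_pos ha hX0', sq_nonneg a]
      have h4 : (s ^ 2 + a - 1) ^ 2 ≤ s * (s ^ 2 + a - 1) ^ 2 := by
        nlinarith [mul_nonneg (show (0:ℝ) ≤ s - 1 by linarith) (sq_nonneg (s ^ 2 + a - 1))]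
      have h5 : 0 < (2 * b1 + a * b2) * s := by positivity
      have h6 : 0 < b1 * a := mul_pos hb1 ha
      nlinarith [hs2]
    have : (-1 : ℝ) < (-b1 * s ^ 2 + (2 * b1 + a * b2) * s + b1 * (a - 1)) / (s * (s ^ 2 + a - 1) ^ 2) := by
      rw [lt_div_iff₀ hDn]
      linarith
    linarith
  -- IVT on [xplus, X]
  have hivt2 : ∃ xM ∈ Set.Icc xplus X, g xM = 0 := by
    have hsub := intermediate_value_Icc (le_of_lt hXp) (hgcont xplus X (le_of_lt hxp))
    have h0mem : (0:ℝ) ∈ Set.Icc (g xplus) (g X) := ⟨le_of_lt hgxp, le_of_lt hgX⟩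
    obtain ⟨xM, hxM, hgxM⟩ := hsub h0mem
    exact ⟨xM, hxM, hgxM⟩
  obtain ⟨xM, hxMm, hgxM⟩ := hivt2
  have hdxM : deriv (psi1 a b1 b2) xM = 0 := by
    rw [hds xM (le_trans (le_of_lt hxp) hxMm.1)]; exact hgxM
  have hxMp : xplus < xM := by
    rcases lt_or_eq_of_le hxMm.1 with h | h
    · exact h
    · exfalso; rw [← h] at hgxM; linarith
  refine ⟨xm, xM, hxm0, hxmp, hxMp, hdxm, hdxM, ?_, ?_, ?_⟩
  · intro x hx0 hxxm
    have := hanti x xm (le_of_lt hx0) hxxm (le_of_lt hxmp)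
    linarith [hdxm ▸ this]
  · intro x hxMx
    have := hmono xM x (le_of_lt hxMp) hxMx
    linarith [hdxM ▸ this]
  · intro x hxmx hxxM
    rcases le_or_gt x xplus with h | h
    · have := hanti xm x (le_of_lt hxm0) hxmx h
      linarith [hdxm ▸ this]
    · have := hmono x xM (le_of_lt h) hxxM
      linarith [hdxM ▸ this]
end

section
/- Let c, v > 0 and ψ₂(x) = v/(c + (x − φ(x))²) with φ(x) = 2(√(1+x) − 1). Then ψ₂′(0) = 0, ψ₂′(x) < 0 for all x > 0, ψ₂′(x) ≥ −v/(c√c) for all x > 0, and ψ₂′(x) → 0 as x → +∞. -/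
noncomputable def psi2 (c v x : ℝ) : ℝ := v / (c + (x - phi x) ^ 2)

lemma hasDeriv_psi2 (c v x : ℝ) (hc : 0 < c) (hx : 0 ≤ x) :
    HasDerivAt (psi2 c v)
      (-(v * (2 * (x - phi x) * (1 - 1 / Real.sqrt (1 + x)))) / (c + (x - phi x) ^ 2) ^ 2) x := by
  have h1 : (0:ℝ) < 1 + x := by linarith
  have hs0 : Real.sqrt (1 + x) ≠ 0 := by positivity
  have hs : HasDerivAt (fun y : ℝ => Real.sqrt (1 + y)) (1 / (2 * Real.sqrt (1 + x))) x := by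
    have := (Real.hasDerivAt_sqrt (ne_of_gt h1)).comp x ((hasDerivAt_id x).const_add 1)
    simpa [Function.comp_def] using this
  have hphi : HasDerivAt phi (1 / Real.sqrt (1 + x)) x := by
    have := ((hs.sub_const 1).const_mul 2)
    have h2 : 2 * (1 / (2 * Real.sqrt (1 + x))) = 1 / Real.sqrt (1 + x) := by
      field_simp
    rw [h2] at this
    exact this
  have hg : HasDerivAt (fun y : ℝ => y - phi y) (1 - 1 / Real.sqrt (1 + x)) x :=
    (hasDerivAt_id x).sub hphi
  have hu : HasDerivAt (fun y : ℝ => c + (y - phi y) ^ 2)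
      (2 * (x - phi x) * (1 - 1 / Real.sqrt (1 + x))) x := by
    have := (hg.pow 2).const_add c
    simpa [mul_comm, mul_assoc] using this
  have hune : c + (x - phi x) ^ 2 ≠ 0 := by positivity
  have := (hasDerivAt_const x v).div hu hune
  exact this.congr_deriv (by ring)

lemma deriv_psi2 (c v x : ℝ) (hc : 0 < c) (hx : 0 ≤ x) :
    deriv (psi2 c v) x
      = -(v * (2 * (x - phi x) * (1 - 1 / Real.sqrt (1 + x)))) / (c + (x - phi x) ^ 2) ^ 2 :=
  (hasDeriv_psi2 c v x hc hx).deriv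

lemma g_pos (x : ℝ) (hx : 0 < x) : 0 < x - phi x := by
  have h1 : (0:ℝ) ≤ 1 + x := by linarith
  have hsq : Real.sqrt (1 + x) ^ 2 = 1 + x := Real.sq_sqrt h1
  have hs1 : 1 < Real.sqrt (1 + x) := by
    nlinarith [Real.sqrt_nonneg (1 + x)]
  unfold phi
  nlinarith [sq_nonneg (Real.sqrt (1 + x) - 1)]

lemma gp_pos (x : ℝ) (hx : 0 < x) : 0 < 1 - 1 / Real.sqrt (1 + x) := by
  have h1 : (0:ℝ) ≤ 1 + x := by linarith
  have hsq : Real.sqrt (1 + x) ^ 2 = 1 + x := Real.sq_sqrt h1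
  have hs1 : 1 < Real.sqrt (1 + x) := by
    nlinarith [Real.sqrt_nonneg (1 + x)]
  have : 1 / Real.sqrt (1 + x) < 1 := by
    rw [div_lt_one (by linarith)]; exact hs1
  linarith

lemma gp_le_one (x : ℝ) (hx : 0 ≤ x) : 1 - 1 / Real.sqrt (1 + x) ≤ 1 := by
  have : 0 ≤ 1 / Real.sqrt (1 + x) := by positivity
  linarith

theorem psi2_deriv_props (c v : ℝ) (hc : 0 < c) (hv : 0 < v) :
    deriv (psi2 c v) 0 = 0 ∧
    (∀ x : ℝ, 0 < x → deriv (psi2 c v) x < 0) ∧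
    (∀ x : ℝ, 0 < x → -(v / (c * Real.sqrt c)) ≤ deriv (psi2 c v) x) ∧
    Filter.Tendsto (deriv (psi2 c v)) Filter.atTop (nhds 0) := by
  have hneg : ∀ x : ℝ, 0 < x → deriv (psi2 c v) x < 0 := by
    intro x hx
    rw [deriv_psi2 c v x hc hx.le]
    have h1 := g_pos x hx
    have h2 := gp_pos x hx
    have hden : (0:ℝ) < (c + (x - phi x) ^ 2) ^ 2 := by positivity
    apply div_neg_of_neg_of_pos _ hden
    have : 0 < v * (2 * (x - phi x) * (1 - 1 / Real.sqrt (1 + x))) := by positivity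
    linarith
  refine ⟨?_, hneg, ?_, ?_⟩
  · rw [deriv_psi2 c v 0 hc le_rfl]
    have : phi 0 = 0 := by simp [phi]
    rw [this]
    simp
  · intro x hx
    rw [deriv_psi2 c v x hc hx.le]
    set g := x - phi x with hg
    have h1 := g_pos x hx
    have h2 := gp_pos x hx
    have h3 := gp_le_one x hx.le
    have hsc : Real.sqrt c ^ 2 = c := Real.sq_sqrt hc.le
    have hscpos : 0 < Real.sqrt c := Real.sqrt_pos.mpr hc
    rw [neg_div, neg_le_neg_iff, div_le_div_iff₀ (by positivity) (by positivity)]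
    have key : 2 * g * Real.sqrt c ≤ c + g ^ 2 := by
      nlinarith [sq_nonneg (Real.sqrt c - g)]
    calc v * (2 * g * (1 - 1 / Real.sqrt (1 + x))) * (c * Real.sqrt c)
        ≤ v * (2 * g * 1) * (c * Real.sqrt c) := by
          have h4 : 0 ≤ 2 * g := by linarith
          gcongr
      _ = (v * c) * (2 * g * Real.sqrt c) := by ring
      _ ≤ (v * c) * (c + g ^ 2) := by
          exact mul_le_mul_of_nonneg_left key (by positivity)
      _ ≤ v * (c + g ^ 2) ^ 2 := by
          nlinarith [mul_nonneg (mul_nonneg hv.le (sq_nonneg g)) (by positivity : (0:ℝ) ≤ c + g ^ 2)]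
  · -- tendsto
    have hgtop : Filter.Tendsto (fun x : ℝ => x - phi x) Filter.atTop Filter.atTop := by
      apply Filter.tendsto_atTop_mono' _ (_ : ∀ᶠ x in Filter.atTop, x / 2 ≤ x - phi x)
      · exact Filter.Tendsto.atTop_div_const (by norm_num) Filter.tendsto_id
      · filter_upwards [Filter.eventually_ge_atTop (8:ℝ)] with x hx8
        have h1 : (0:ℝ) ≤ 1 + x := by linarith
        have hle : Real.sqrt (1 + x) ≤ x / 4 + 1 := by
          have h2 : 1 + x ≤ (x / 4 + 1) ^ 2 := by nlinarith
          calc Real.sqrt (1 + x) ≤ Real.sqrt ((x / 4 + 1) ^ 2) := Real.sqrt_le_sqrt h2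
            _ = x / 4 + 1 := Real.sqrt_sq (by linarith)
        unfold phi
        linarith
    have hg3 : Filter.Tendsto (fun x : ℝ => (x - phi x) ^ 3) Filter.atTop Filter.atTop :=
      (Filter.tendsto_pow_atTop (by norm_num : 3 ≠ 0)).comp hgtop
    have hlow : Filter.Tendsto (fun x : ℝ => -(2 * v / (x - phi x) ^ 3)) Filter.atTop (nhds 0) := by
      have := Filter.Tendsto.div_atTop (tendsto_const_nhds (x := 2 * v) (f := Filter.atTop)) hg3
      simpa using this.neg
    apply tendsto_of_tendsto_of_tendsto_of_le_of_le' hlow tendsto_const_nhds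
    · filter_upwards [Filter.eventually_ge_atTop (8:ℝ)] with x hx8
      have hx : (0:ℝ) < x := by linarith
      rw [deriv_psi2 c v x hc hx.le]
      set g := x - phi x with hg
      have h1 := g_pos x hx
      have h2 := gp_pos x hx
      have h3 := gp_le_one x hx.le
      rw [neg_div, neg_le_neg_iff, div_le_div_iff₀ (by positivity) (by positivity)]
      calc v * (2 * g * (1 - 1 / Real.sqrt (1 + x))) * g ^ 3
          ≤ v * (2 * g * 1) * g ^ 3 := by
            have h4 : 0 ≤ 2 * g := by linarith
            gcongr
        _ = 2 * v * (g ^ 2) ^ 2 := by ring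
        _ ≤ 2 * v * (c + g ^ 2) ^ 2 := by
            have : (g ^ 2) ^ 2 ≤ (c + g ^ 2) ^ 2 := by nlinarith [sq_nonneg g]
            nlinarith [hv.le]
    · filter_upwards [Filter.eventually_gt_atTop (0:ℝ)] with x hx
      exact (hneg x hx).le
end

section
/- For all positive parameters a, b₁, b₂, c, v, the function ψ(x) = ψ₁(x) − ψ₂(x), where ψ₁(x) = (b₁φ(x) + b₂x)/(a+x) + x and ψ₂(x) = v/(c + (x − φ(x))²) with φ(x) = 2(√(1+x) − 1), has at least one zero and at most three zeros in (0, +∞). -/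
/-- The polynomial obtained from `psi1 - psi2 = 0` by substituting `x = u^2 + 2u`
(i.e. `u = √(1+x) - 1`) and clearing denominators. -/
noncomputable def PP (a b1 b2 c v : ℝ) : ℝ → ℝ := fun u =>
  u^8 + 4*u^7 + (4+a+b2)*u^6 + 2*(a+b1+b2)*u^5 + c*u^4 + 4*c*u^3
    + (c*(4+a+b2) - v)*u^2 + (2*c*(a+b1+b2) - 2*v)*u - v*a

noncomputable def PP1 (a b1 b2 c v : ℝ) : ℝ → ℝ := fun u =>
  8*u^7 + 28*u^6 + 6*(4+a+b2)*u^5 + 10*(a+b1+b2)*u^4 + 4*c*u^3 + 12*c*u^2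
    + (2*c*(4+a+b2) - 2*v)*u + (2*c*(a+b1+b2) - 2*v)

noncomputable def PP2 (a b1 b2 c v : ℝ) : ℝ → ℝ := fun u =>
  56*u^6 + 168*u^5 + 30*(4+a+b2)*u^4 + 40*(a+b1+b2)*u^3 + 12*c*u^2 + 24*c*u
    + (2*c*(4+a+b2) - 2*v)

noncomputable def PP3 (a b1 b2 c v : ℝ) : ℝ → ℝ := fun u =>
  336*u^5 + 840*u^4 + 120*(4+a+b2)*u^3 + 120*(a+b1+b2)*u^2 + 24*c*u + 24*c

lemma hasDerivAt_PP (a b1 b2 c v u : ℝ) :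
    HasDerivAt (PP a b1 b2 c v) (PP1 a b1 b2 c v u) u := by
  have H : HasDerivAt (fun u : ℝ =>
      u^8 + 4*u^7 + (4+a+b2)*u^6 + 2*(a+b1+b2)*u^5 + c*u^4 + 4*c*u^3
        + (c*(4+a+b2) - v)*u^2 + (2*c*(a+b1+b2) - 2*v)*u - v*a)
      ((8:ℕ)*u^7 + 4*((7:ℕ)*u^6) + (4+a+b2)*((6:ℕ)*u^5) + 2*(a+b1+b2)*((5:ℕ)*u^4)
        + c*((4:ℕ)*u^3) + 4*c*((3:ℕ)*u^2) + (c*(4+a+b2) - v)*((2:ℕ)*u^1)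
        + (2*c*(a+b1+b2) - 2*v)*1) u := by
    exact (((((((hasDerivAt_pow 8 u).add
      ((hasDerivAt_pow 7 u).const_mul 4)).add
      ((hasDerivAt_pow 6 u).const_mul (4+a+b2))).add
      ((hasDerivAt_pow 5 u).const_mul (2*(a+b1+b2)))).add
      ((hasDerivAt_pow 4 u).const_mul c)).add
      ((hasDerivAt_pow 3 u).const_mul (4*c))).add
      ((hasDerivAt_pow 2 u).const_mul (c*(4+a+b2) - v))).add
      ((hasDerivAt_id u).const_mul (2*c*(a+b1+b2) - 2*v)) |>.sub_const (v*a)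
  have : ((8:ℕ)*u^7 + 4*((7:ℕ)*u^6) + (4+a+b2)*((6:ℕ)*u^5) + 2*(a+b1+b2)*((5:ℕ)*u^4)
        + c*((4:ℕ)*u^3) + 4*c*((3:ℕ)*u^2) + (c*(4+a+b2) - v)*((2:ℕ)*u^1)
        + (2*c*(a+b1+b2) - 2*v)*1) = PP1 a b1 b2 c v u := by
    unfold PP1; push_cast; ring
  exact this ▸ H

lemma hasDerivAt_PP1 (a b1 b2 c v u : ℝ) :
    HasDerivAt (PP1 a b1 b2 c v) (PP2 a b1 b2 c v u) u := by
  have H : HasDerivAt (fun u : ℝ =>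
      8*u^7 + 28*u^6 + 6*(4+a+b2)*u^5 + 10*(a+b1+b2)*u^4 + 4*c*u^3 + 12*c*u^2
        + (2*c*(4+a+b2) - 2*v)*u + (2*c*(a+b1+b2) - 2*v))
      (8*((7:ℕ)*u^6) + 28*((6:ℕ)*u^5) + 6*(4+a+b2)*((5:ℕ)*u^4) + 10*(a+b1+b2)*((4:ℕ)*u^3)
        + 4*c*((3:ℕ)*u^2) + 12*c*((2:ℕ)*u^1) + (2*c*(4+a+b2) - 2*v)*1) u := by
    exact ((((((hasDerivAt_pow 7 u).const_mul 8).add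
      ((hasDerivAt_pow 6 u).const_mul 28)).add
      ((hasDerivAt_pow 5 u).const_mul (6*(4+a+b2)))).add
      ((hasDerivAt_pow 4 u).const_mul (10*(a+b1+b2)))).add
      ((hasDerivAt_pow 3 u).const_mul (4*c))).add
      ((hasDerivAt_pow 2 u).const_mul (12*c)) |>.add
      ((hasDerivAt_id u).const_mul (2*c*(4+a+b2) - 2*v)) |>.add_const (2*c*(a+b1+b2) - 2*v)
  have : (8*((7:ℕ)*u^6) + 28*((6:ℕ)*u^5) + 6*(4+a+b2)*((5:ℕ)*u^4) + 10*(a+b1+b2)*((4:ℕ)*u^3)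
        + 4*c*((3:ℕ)*u^2) + 12*c*((2:ℕ)*u^1) + (2*c*(4+a+b2) - 2*v)*1)
      = PP2 a b1 b2 c v u := by
    unfold PP2; push_cast; ring
  exact this ▸ H

lemma hasDerivAt_PP2 (a b1 b2 c v u : ℝ) :
    HasDerivAt (PP2 a b1 b2 c v) (PP3 a b1 b2 c v u) u := by
  have H : HasDerivAt (fun u : ℝ =>
      56*u^6 + 168*u^5 + 30*(4+a+b2)*u^4 + 40*(a+b1+b2)*u^3 + 12*c*u^2 + 24*c*u
        + (2*c*(4+a+b2) - 2*v))
      (56*((6:ℕ)*u^5) + 168*((5:ℕ)*u^4) + 30*(4+a+b2)*((4:ℕ)*u^3) + 40*(a+b1+b2)*((3:ℕ)*u^2)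
        + 12*c*((2:ℕ)*u^1) + 24*c*1) u := by
    exact (((((hasDerivAt_pow 6 u).const_mul 56).add
      ((hasDerivAt_pow 5 u).const_mul 168)).add
      ((hasDerivAt_pow 4 u).const_mul (30*(4+a+b2)))).add
      ((hasDerivAt_pow 3 u).const_mul (40*(a+b1+b2)))).add
      ((hasDerivAt_pow 2 u).const_mul (12*c)) |>.add
      ((hasDerivAt_id u).const_mul (24*c)) |>.add_const (2*c*(4+a+b2) - 2*v)
  have : (56*((6:ℕ)*u^5) + 168*((5:ℕ)*u^4) + 30*(4+a+b2)*((4:ℕ)*u^3) + 40*(a+b1+b2)*((3:ℕ)*u^2)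
        + 12*c*((2:ℕ)*u^1) + 24*c*1) = PP3 a b1 b2 c v u := by
    unfold PP3; push_cast; ring
  exact this ▸ H

lemma PP3_pos (a b1 b2 c v : ℝ) (ha : 0 < a) (hb1 : 0 < b1) (hb2 : 0 < b2) (hc : 0 < c)
    {u : ℝ} (hu : 0 < u) : 0 < PP3 a b1 b2 c v u := by
  unfold PP3
  positivity

/-- Rolle's theorem, convenient form. -/
lemma rolle' {f f' : ℝ → ℝ} (hf : ∀ x, HasDerivAt f (f' x) x) {a b : ℝ} (hab : a < b)
    (ha : f a = 0) (hb : f b = 0) : ∃ c, a < c ∧ c < b ∧ f' c = 0 := by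
  obtain ⟨c, hc, hc0⟩ := exists_hasDerivAt_eq_zero hab
    ((continuous_iff_continuousAt.mpr fun x => (hf x).continuousAt).continuousOn)
    (ha.trans hb.symm) (fun x _ => hf x)
  exact ⟨c, hc.1, hc.2, hc0⟩

/-- Key algebraic identity: for `x = u^2 + 2u`, `u ≥ 0`, the function ψ equals
`PP u` divided by the (positive) denominators. -/
lemma bridge (a b1 b2 c v : ℝ) (ha : 0 < a) (hc : 0 < c) {u : ℝ} (hu : 0 ≤ u) :
    psi1 a b1 b2 (u^2 + 2*u) - psi2 c v (u^2 + 2*u)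
      = PP a b1 b2 c v u / ((a + (u^2 + 2*u)) * (c + u^4)) := by
  have hs : Real.sqrt (1 + (u^2 + 2*u)) = u + 1 := by
    rw [show (1:ℝ) + (u^2 + 2*u) = (u+1)^2 by ring, Real.sqrt_sq (by linarith)]
  have hden1 : a + (u^2 + 2*u) > 0 := by nlinarith
  have hden2 : c + u^4 > 0 := by positivity
  unfold psi1 psi2 phi PP
  rw [hs]
  have h1 : (u^2 + 2*u) - 2*(u + 1 - 1) = u^2 := by ring
  rw [h1]
  field_simp
  ring

lemma four_in_set {s : Set ℝ} (h : 3 < s.encard) :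
    ∃ x1 x2 x3 x4, x1 ∈ s ∧ x2 ∈ s ∧ x3 ∈ s ∧ x4 ∈ s ∧ x1 < x2 ∧ x2 < x3 ∧ x3 < x4 := by
  obtain ⟨t, hts, ht⟩ := Set.exists_subset_encard_eq (show (4:ℕ∞) ≤ s.encard from
    Order.add_one_le_of_lt h)
  have hfin : t.Finite := Set.finite_of_encard_eq_coe (k := 4) ht
  have hcard : hfin.toFinset.card = 4 := by
    have := hfin.encard_eq_coe_toFinset_card
    rw [ht] at this
    exact_mod_cast this.symm
  obtain ⟨l, hl⟩ : ∃ l, Finset.sort hfin.toFinset (· ≤ ·) = l := ⟨_, rfl⟩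
  have hlen : l.length = 4 := by rw [← hl, Finset.length_sort]; exact hcard
  have hsort : l.Pairwise (· < ·) := hl ▸ (Finset.sortedLT_sort hfin.toFinset).pairwise
  have hmem : ∀ x ∈ l, x ∈ s := by
    intro x hx
    rw [← hl, Finset.mem_sort] at hx
    exact hts (hfin.mem_toFinset.mp hx)
  rcases l with _ | ⟨p, _ | ⟨q, _ | ⟨r, _ | ⟨w, _ | _⟩⟩⟩⟩ <;>
    simp only [List.length] at hlen <;> try omega
  simp only [List.pairwise_cons, List.mem_cons, List.not_mem_nil, or_false,
    List.mem_singleton] at hsort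
  exact ⟨p, q, r, w, hmem p (by simp), hmem q (by simp), hmem r (by simp), hmem w (by simp),
    hsort.1 q (Or.inl rfl), hsort.2.1 r (Or.inl rfl), hsort.2.2.1 w rfl⟩

theorem psi_zeros (a b1 b2 c v : ℝ)
    (ha : 0 < a) (hb1 : 0 < b1) (hb2 : 0 < b2) (hc : 0 < c) (hv : 0 < v) :
    (∃ x : ℝ, 0 < x ∧ psi1 a b1 b2 x - psi2 c v x = 0) ∧
    {x : ℝ | 0 < x ∧ psi1 a b1 b2 x - psi2 c v x = 0}.encard ≤ 3 := by
  constructor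
  · -- existence via IVT on PP
    set x0 : ℝ := v / c with hx0
    have hx0pos : 0 < x0 := by positivity
    set u0 : ℝ := Real.sqrt (1 + x0) - 1 with hu0
    have hsq : Real.sqrt (1 + x0) ^ 2 = 1 + x0 := Real.sq_sqrt (by linarith)
    have hsnn : 0 ≤ Real.sqrt (1 + x0) := Real.sqrt_nonneg _
    have hu0pos : 0 < u0 := by
      have : 1 < Real.sqrt (1 + x0) := by nlinarith
      simp [hu0]; linarith
    have hxu : u0^2 + 2*u0 = x0 := by nlinarith
    have hP0 : PP a b1 b2 c v 0 < 0 := by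
      unfold PP; simp; positivity
    have hPu0 : 0 < PP a b1 b2 c v u0 := by
      have hveq : v = c * (u0^2 + 2*u0) := by
        rw [hxu, hx0]; field_simp
      have hid : PP a b1 b2 c v u0
          = (2*b1*u0 + b2*(u0^2+2*u0))*(c+u0^4) + (u0^2+2*u0)*(a+(u0^2+2*u0))*u0^4 := by
        unfold PP; rw [hveq]; ring
      rw [hid]
      have h1 : 0 < u0^2 + 2*u0 := by nlinarith
      have h2 : 0 < c + u0^4 := by positivity
      nlinarith [mul_pos (mul_pos hb1 hu0pos) h2, mul_pos (mul_pos hb2 h1) h2,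
        mul_pos (mul_pos h1 (by nlinarith : (0:ℝ) < a + (u0^2+2*u0))) (by positivity : (0:ℝ) < u0^4)]
    have hcont : Continuous (PP a b1 b2 c v) :=
      continuous_iff_continuousAt.mpr fun x => (hasDerivAt_PP a b1 b2 c v x).continuousAt
    have := intermediate_value_Ioo (le_of_lt hu0pos) hcont.continuousOn
      (Set.mem_Ioo.mpr ⟨hP0, hPu0⟩)
    obtain ⟨u, hu, hPu⟩ := this
    refine ⟨u^2 + 2*u, by nlinarith [hu.1], ?_⟩
    rw [bridge a b1 b2 c v ha hc (le_of_lt hu.1), hPu]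
    simp
  · -- at most three zeros
    by_contra h
    push_neg at h
    obtain ⟨x1, x2, x3, x4, hm1, hm2, hm3, hm4, h12, h23, h34⟩ := four_in_set h
    -- transfer to u-coordinates
    have key : ∀ x : ℝ, 0 < x → psi1 a b1 b2 x - psi2 c v x = 0 →
        ∃ u : ℝ, 0 < u ∧ u = Real.sqrt (1 + x) - 1 ∧ PP a b1 b2 c v u = 0 := by
      intro x hx hzero
      set u : ℝ := Real.sqrt (1 + x) - 1 with hu
      have hsq : Real.sqrt (1 + x) ^ 2 = 1 + x := Real.sq_sqrt (by linarith)
      have hsnn : 0 ≤ Real.sqrt (1 + x) := Real.sqrt_nonneg _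
      have hupos : 0 < u := by
        have : 1 < Real.sqrt (1 + x) := by nlinarith
        simp [hu]; linarith
      have hxu : u^2 + 2*u = x := by nlinarith
      refine ⟨u, hupos, rfl, ?_⟩
      have hbr := bridge a b1 b2 c v ha hc (le_of_lt hupos)
      rw [hxu, hzero] at hbr
      have hden : (a + x) * (c + u ^ 4) ≠ 0 := by positivity
      rcases div_eq_zero_iff.mp hbr.symm with h | h
      · exact h
      · exact absurd h hden
    obtain ⟨u1, hu1p, hu1e, hu1z⟩ := key x1 hm1.1 hm1.2
    obtain ⟨u2, hu2p, hu2e, hu2z⟩ := key x2 hm2.1 hm2.2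
    obtain ⟨u3, hu3p, hu3e, hu3z⟩ := key x3 hm3.1 hm3.2
    obtain ⟨u4, hu4p, hu4e, hu4z⟩ := key x4 hm4.1 hm4.2
    have hmono : ∀ {x y : ℝ}, 0 < x → x < y →
        Real.sqrt (1 + x) - 1 < Real.sqrt (1 + y) - 1 := by
      intro x y hx hxy
      have := Real.sqrt_lt_sqrt (by linarith : (0:ℝ) ≤ 1 + x) (by linarith : 1 + x < 1 + y)
      linarith
    have hu12 : u1 < u2 := by rw [hu1e, hu2e]; exact hmono hm1.1 h12
    have hu23 : u2 < u3 := by rw [hu2e, hu3e]; exact hmono hm2.1 h23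
    have hu34 : u3 < u4 := by rw [hu3e, hu4e]; exact hmono hm3.1 h34
    -- Rolle three times
    obtain ⟨y1, hy1a, hy1b, hy1z⟩ := rolle' (hasDerivAt_PP a b1 b2 c v) hu12 hu1z hu2z
    obtain ⟨y2, hy2a, hy2b, hy2z⟩ := rolle' (hasDerivAt_PP a b1 b2 c v) hu23 hu2z hu3z
    obtain ⟨y3, hy3a, hy3b, hy3z⟩ := rolle' (hasDerivAt_PP a b1 b2 c v) hu34 hu3z hu4z
    have hy12 : y1 < y2 := lt_trans hy1b hy2a
    have hy23 : y2 < y3 := lt_trans hy2b hy3a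
    obtain ⟨z1, hz1a, hz1b, hz1z⟩ := rolle' (hasDerivAt_PP1 a b1 b2 c v) hy12 hy1z hy2z
    obtain ⟨z2, hz2a, hz2b, hz2z⟩ := rolle' (hasDerivAt_PP1 a b1 b2 c v) hy23 hy2z hy3z
    have hz12 : z1 < z2 := lt_trans hz1b hz2a
    obtain ⟨w, hwa, hwb, hwz⟩ := rolle' (hasDerivAt_PP2 a b1 b2 c v) hz12 hz1z hz2z
    have hwpos : 0 < w := by linarith
    have := PP3_pos a b1 b2 c v ha hb1 hb2 hc hwpos
    rw [hwz] at this
    exact lt_irrefl 0 this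
end
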